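/- arXiv:2601.19319 — 5 statements merged into one kernel-verified Lean document; each statement's English description precedes it below -/
import Mathlib

section
/- Let ℓ be a prime, d ≥ 1 an integer, and n, m ∈ ℤ. Then #{g ∈ (ℤ/ℓ²ℤ)[t] : deg(g) ≤ d, g(n) = g(m) = 0} / ℓ^{2(d+1)} equals ℓ^{−4} if v_ℓ(m−n) = 0, equals ℓ^{−3} if v_ℓ(m−n) = 1, and equals ℓ^{−2} if v_ℓ(m−n) ≥ 2. -/
noncomputable section

/-- The number of polynomials `g = ∑_{i=0}^{d} c_i t^i` with coefficients in `ℤ/ℓ²ℤ`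
such that `g(n) = g(m) = 0`. -/
def countDoubleRoot (ℓ d : ℕ) (n m : ℤ) : ℕ :=
  Nat.card {c : Fin (d + 1) → ZMod (ℓ ^ 2) |
    (∑ i, c i * ((n : ZMod (ℓ ^ 2))) ^ (i : ℕ)) = 0 ∧
    (∑ i, c i * ((m : ZMod (ℓ ^ 2))) ^ (i : ℕ)) = 0}


private def geomH {R : Type*} [CommRing R] (x y : R) (i : ℕ) : R :=
  ∑ j ∈ Finset.range i, y ^ j * x ^ (i - 1 - j)

private lemma geomH_mul {R : Type*} [CommRing R] (x y : R) (i : ℕ) :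
    geomH x y i * (y - x) = y ^ i - x ^ i := geom_sum₂_mul y x i

private lemma geomH_one {R : Type*} [CommRing R] (x y : R) : geomH x y 1 = 1 := by
  simp [geomH]

private lemma sum_split {R : Type*} [CommRing R] (e : ℕ) (c : Fin (e+2) → R) (f : ℕ → R) :
    ∑ i, c i * f (i:ℕ) = c 0 * f 0 + c 1 * f 1 + ∑ i : Fin e, c i.succ.succ * f ((i:ℕ)+2) := by
  rw [Fin.sum_univ_succ, Fin.sum_univ_succ]
  simp [Fin.val_succ, add_assoc]

private noncomputable def mainEquiv {R : Type*} [CommRing R] (x y : R) (e : ℕ) :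
    {c : Fin (e+2) → R // (∑ i, c i * x ^ (i:ℕ)) = 0 ∧ (∑ i, c i * y ^ (i:ℕ)) = 0}
    ≃ {z : R // z * (y - x) = 0} × (Fin e → R) where
  toFun c := (⟨c.1 1 + ∑ i : Fin e, c.1 i.succ.succ * geomH x y ((i:ℕ)+2), by
      obtain ⟨c, h1, h2⟩ := c
      have := sum_split e c (fun i => x ^ i)
      have h2' := sum_split e c (fun i => y ^ i)
      rw [sum_split e c (fun i => x ^ i)] at h1
      rw [sum_split e c (fun i => y ^ i)] at h2
      have key : (c 1 + ∑ i : Fin e, c i.succ.succ * geomH x y ((i:ℕ)+2)) * (y - x)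
          = (c 0 * y ^ 0 + c 1 * y ^ 1 + ∑ i : Fin e, c i.succ.succ * y ^ ((i:ℕ)+2))
            - (c 0 * x ^ 0 + c 1 * x ^ 1 + ∑ i : Fin e, c i.succ.succ * x ^ ((i:ℕ)+2)) := by
        rw [add_mul, Finset.sum_mul]
        have : ∀ i : Fin e, c i.succ.succ * geomH x y ((i:ℕ)+2) * (y - x)
            = c i.succ.succ * y ^ ((i:ℕ)+2) - c i.succ.succ * x ^ ((i:ℕ)+2) := by
          intro i
          rw [mul_assoc, geomH_mul, mul_sub]
        rw [Finset.sum_congr rfl (fun i _ => this i), Finset.sum_sub_distrib]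
        ring
      rw [key, h1, h2, sub_zero]⟩,
    fun i => c.1 i.succ.succ)
  invFun p := ⟨Fin.cons (-((p.1.1 - ∑ i : Fin e, p.2 i * geomH x y ((i:ℕ)+2)) * x
        + ∑ i : Fin e, p.2 i * x ^ ((i:ℕ)+2)))
      (Fin.cons (p.1.1 - ∑ i : Fin e, p.2 i * geomH x y ((i:ℕ)+2)) p.2), by
    obtain ⟨⟨z, hz⟩, t⟩ := p
    dsimp only
    set c1 := z - ∑ i : Fin e, t i * geomH x y ((i:ℕ)+2) with hc1
    set c0 := -(c1 * x + ∑ i : Fin e, t i * x ^ ((i:ℕ)+2)) with hc0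
    set c : Fin (e+2) → R := Fin.cons c0 (Fin.cons c1 t) with hc
    have e0 : c 0 = c0 := rfl
    have e1 : c 1 = c1 := rfl
    have et : ∀ i : Fin e, c i.succ.succ = t i := fun i => by simp [hc]
    have hx : (∑ i, c i * x ^ (i:ℕ)) = 0 := by
      rw [sum_split e c (fun i => x ^ i), e0, e1,
        Finset.sum_congr rfl (fun i _ => by rw [et i]), hc0]
      ring
    refine ⟨hx, ?_⟩
    rw [sum_split e c (fun i => y ^ i), e0, e1,
      Finset.sum_congr rfl (fun i _ => by rw [et i])]
    have key : (c0 * y ^ 0 + c1 * y ^ 1 + ∑ i : Fin e, t i * y ^ ((i:ℕ)+2))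
        - (c0 * x ^ 0 + c1 * x ^ 1 + ∑ i : Fin e, t i * x ^ ((i:ℕ)+2))
        = (c1 + ∑ i : Fin e, t i * geomH x y ((i:ℕ)+2)) * (y - x) := by
      rw [add_mul, Finset.sum_mul]
      have : ∀ i : Fin e, t i * geomH x y ((i:ℕ)+2) * (y - x)
          = t i * y ^ ((i:ℕ)+2) - t i * x ^ ((i:ℕ)+2) := by
        intro i; rw [mul_assoc, geomH_mul, mul_sub]
      rw [Finset.sum_congr rfl (fun i _ => this i), Finset.sum_sub_distrib]
      ring
    have hz' : (c1 + ∑ i : Fin e, t i * geomH x y ((i:ℕ)+2)) * (y - x) = 0 := by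
      rw [hc1]; linear_combination hz
    have := key.trans hz'
    have hxs : (c0 * x ^ 0 + c1 * x ^ 1 + ∑ i : Fin e, t i * x ^ ((i:ℕ)+2)) = 0 := by
      rw [hc0]; ring
    linear_combination this + hxs⟩
  left_inv := by
    rintro ⟨c, h1, h2⟩
    ext i
    dsimp only
    rw [sum_split e c (fun i => x ^ i)] at h1
    refine Fin.cases ?_ (fun j => Fin.cases ?_ (fun j => ?_) j) i
    · simp only [Fin.cons_zero]
      have : c 1 + ∑ i : Fin e, c i.succ.succ * geomH x y ((i:ℕ)+2)
          - ∑ i : Fin e, c i.succ.succ * geomH x y ((i:ℕ)+2) = c 1 := by ring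
      rw [this]
      simp only [pow_zero, pow_one, mul_one] at h1
      linear_combination -h1
    · simp [Fin.succ_zero_eq_one]
    · simp
  right_inv := by
    rintro ⟨⟨z, hz⟩, t⟩
    refine Prod.ext (Subtype.ext ?_) ?_
    · dsimp only
      rw [← Fin.succ_zero_eq_one]
      simp only [Fin.cons_succ, Fin.cons_zero]
      ring
    · funext i
      dsimp only
      simp

private lemma mul_cast_eq_zero_iff (ℓ : ℕ) (hℓ : ℓ ≠ 0) (z : ZMod (ℓ^2)) (a : ℤ) :
    z * (a : ZMod (ℓ^2)) = 0 ↔ (ℓ:ℤ)^2 ∣ (z.val : ℤ) * a := by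
  haveI : NeZero (ℓ^2) := ⟨pow_ne_zero 2 hℓ⟩
  have hz : z = ((z.val : ℤ) : ZMod (ℓ^2)) := by simp
  rw [hz, ← Int.cast_mul, ZMod.intCast_zmod_eq_zero_iff_dvd]
  push_cast
  simp

private lemma card_ann_unit (ℓ : ℕ) (hℓ : ℓ.Prime) (a : ℤ) (ha : ¬ (ℓ:ℤ) ∣ a) :
    Nat.card {z : ZMod (ℓ^2) // z * (a : ZMod (ℓ^2)) = 0} = 1 := by
  haveI : NeZero (ℓ^2) := ⟨pow_ne_zero 2 hℓ.ne_zero⟩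
  have hp : Prime (ℓ:ℤ) := Nat.prime_iff_prime_int.mp hℓ
  have hco : IsCoprime ((ℓ:ℤ)^2) a := ((hp.coprime_iff_not_dvd).mpr ha).pow_left
  rw [Nat.card_eq_one_iff_unique]
  refine ⟨⟨?_⟩, ⟨⟨0, by simp⟩⟩⟩
  rintro ⟨z, hz⟩ ⟨w, hw⟩
  rw [mul_cast_eq_zero_iff ℓ hℓ.ne_zero] at hz hw
  have hz2 : (ℓ^2 : ℕ) ∣ z.val := by exact_mod_cast hco.dvd_of_dvd_mul_right hz
  have hw2 : (ℓ^2 : ℕ) ∣ w.val := by exact_mod_cast hco.dvd_of_dvd_mul_right hw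
  have hz0 : z = 0 := (ZMod.val_eq_zero z).mp (Nat.eq_zero_of_dvd_of_lt hz2 (ZMod.val_lt z))
  have hw0 : w = 0 := (ZMod.val_eq_zero w).mp (Nat.eq_zero_of_dvd_of_lt hw2 (ZMod.val_lt w))
  exact Subtype.ext (hz0.trans hw0.symm)

private lemma card_ann_zero (ℓ : ℕ) (hℓ : ℓ.Prime) (a : ℤ) (ha : (ℓ:ℤ)^2 ∣ a) :
    Nat.card {z : ZMod (ℓ^2) // z * (a : ZMod (ℓ^2)) = 0} = ℓ^2 := by
  have hz : (a : ZMod (ℓ^2)) = 0 := by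
    rw [ZMod.intCast_zmod_eq_zero_iff_dvd]; push_cast; exact ha
  have hall : ∀ z : ZMod (ℓ^2), z * (a : ZMod (ℓ^2)) = 0 := fun z => by rw [hz, mul_zero]
  calc Nat.card {z : ZMod (ℓ^2) // z * (a : ZMod (ℓ^2)) = 0}
      = Nat.card (ZMod (ℓ^2)) := Nat.card_congr (Equiv.subtypeUnivEquiv hall)
    _ = ℓ^2 := Nat.card_zmod _

private lemma card_ann_ell (ℓ : ℕ) (hℓ : ℓ.Prime) (a : ℤ) (ha : (ℓ:ℤ) ∣ a)
    (ha2 : ¬ (ℓ:ℤ)^2 ∣ a) :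
    Nat.card {z : ZMod (ℓ^2) // z * (a : ZMod (ℓ^2)) = 0} = ℓ := by
  haveI : NeZero (ℓ^2) := ⟨pow_ne_zero 2 hℓ.ne_zero⟩
  haveI : NeZero ℓ := ⟨hℓ.ne_zero⟩
  have hp : Prime (ℓ:ℤ) := Nat.prime_iff_prime_int.mp hℓ
  have hℓ0 : (ℓ:ℤ) ≠ 0 := by exact_mod_cast hℓ.ne_zero
  obtain ⟨b, rfl⟩ := ha
  have hb : ¬ (ℓ:ℤ) ∣ b := by
    rintro ⟨c, rfl⟩; exact ha2 ⟨c, by ring⟩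
  have key : ∀ z : ZMod (ℓ^2), (z * (((ℓ:ℤ) * b : ℤ) : ZMod (ℓ^2)) = 0) ↔ ℓ ∣ z.val := by
    intro z
    rw [mul_cast_eq_zero_iff ℓ hℓ.ne_zero]
    constructor
    · rintro ⟨c, hc⟩
      have h1 : (z.val : ℤ) * b = (ℓ:ℤ) * c := by
        apply mul_right_cancel₀ hℓ0
        linear_combination hc
      have h2 : (ℓ:ℤ) ∣ (z.val : ℤ) * b := ⟨c, h1⟩
      have h3 : (ℓ:ℤ) ∣ (z.val : ℤ) := (hp.dvd_mul.mp h2).resolve_right hb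
      exact_mod_cast h3
    · rintro ⟨k, hk⟩
      exact ⟨(k : ℤ) * b, by rw [hk]; push_cast; ring⟩
  rw [Nat.card_congr (Equiv.subtypeEquivRight key)]
  have hlt : ∀ j : ZMod ℓ, j.val * ℓ < ℓ^2 := by
    intro j
    have := ZMod.val_lt j
    calc j.val * ℓ < ℓ * ℓ := by
          exact (Nat.mul_lt_mul_right hℓ.pos).mpr this
      _ = ℓ^2 := (sq ℓ).symm
  have hvv : ∀ j : ZMod ℓ, ((j.val * ℓ : ℕ) : ZMod (ℓ^2)).val = j.val * ℓ :=
    fun j => ZMod.val_cast_of_lt (hlt j)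
  refine (Nat.card_eq_of_bijective
    (fun j : ZMod ℓ => (⟨((j.val * ℓ : ℕ) : ZMod (ℓ^2)), by rw [hvv j]; exact dvd_mul_left ℓ j.val⟩ :
      {z : ZMod (ℓ^2) // ℓ ∣ z.val})) ⟨?_, ?_⟩).symm.trans (Nat.card_zmod ℓ)
  · intro j j' hjj
    have h0 := congrArg (fun w : {z : ZMod (ℓ^2) // ℓ ∣ z.val} => w.1.val) hjj
    dsimp only at h0
    rw [hvv j, hvv j'] at h0
    exact ZMod.val_injective ℓ (Nat.eq_of_mul_eq_mul_right hℓ.pos h0)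
  · rintro ⟨z, k, hk⟩
    have hkl : k < ℓ := by
      by_contra hge
      push_neg at hge
      have : ℓ^2 ≤ z.val := by
        rw [hk, sq]
        exact Nat.mul_le_mul_left ℓ hge
      exact absurd (ZMod.val_lt z) (not_lt.mpr this)
    refine ⟨(k : ZMod ℓ), ?_⟩
    apply Subtype.ext
    have hkv : ((k : ZMod ℓ)).val = k := ZMod.val_cast_of_lt hkl
    show (((k : ZMod ℓ).val * ℓ : ℕ) : ZMod (ℓ^2)) = z
    rw [hkv, mul_comm, ← hk]
    simp

private lemma count_eq (ℓ : ℕ) (hℓ : ℓ ≠ 0) (e : ℕ) (n m : ℤ) :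
    countDoubleRoot ℓ (e+1) n m
      = Nat.card {z : ZMod (ℓ^2) // z * ((m - n : ℤ) : ZMod (ℓ^2)) = 0} * ℓ^(2*e) := by
  have hyx : ((m - n : ℤ) : ZMod (ℓ^2)) = (m : ZMod (ℓ^2)) - (n : ZMod (ℓ^2)) := by
    push_cast; ring
  calc countDoubleRoot ℓ (e+1) n m
      = Nat.card ({z : ZMod (ℓ^2) // z * ((m : ZMod (ℓ^2)) - (n : ZMod (ℓ^2))) = 0}
          × (Fin e → ZMod (ℓ^2))) :=
        Nat.card_congr (mainEquiv (n : ZMod (ℓ^2)) (m : ZMod (ℓ^2)) e)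
    _ = Nat.card {z : ZMod (ℓ^2) // z * ((m - n : ℤ) : ZMod (ℓ^2)) = 0} * ℓ^(2*e) := by
        rw [Nat.card_prod, hyx]
        congr 1
        rw [Nat.card_pi]
        simp [Nat.card_zmod, pow_mul]

private lemma real_calc (ℓ : ℕ) (hℓ : ℓ ≠ 0) (a b : ℕ) (c : ℤ) (h : (a:ℤ) - b = c) :
    ((ℓ:ℝ))^a / (ℓ:ℝ)^b = (ℓ:ℝ)^c := by
  have h0 : (ℓ:ℝ) ≠ 0 := Nat.cast_ne_zero.mpr hℓ
  rw [← zpow_natCast (ℓ:ℝ) a, ← zpow_natCast (ℓ:ℝ) b, ← zpow_sub₀ h0, h]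

theorem local_double_count (ℓ : ℕ) (hℓ : ℓ.Prime) (d : ℕ) (hd : 1 ≤ d) (n m : ℤ) :
    (¬ (ℓ : ℤ) ∣ (m - n) →
      (countDoubleRoot ℓ d n m : ℝ) / (ℓ : ℝ) ^ (2 * (d + 1)) = ((ℓ : ℝ)) ^ (-4 : ℤ)) ∧
    ((ℓ : ℤ) ∣ (m - n) → ¬ (ℓ : ℤ) ^ 2 ∣ (m - n) →
      (countDoubleRoot ℓ d n m : ℝ) / (ℓ : ℝ) ^ (2 * (d + 1)) = ((ℓ : ℝ)) ^ (-3 : ℤ)) ∧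
    ((ℓ : ℤ) ^ 2 ∣ (m - n) →
      (countDoubleRoot ℓ d n m : ℝ) / (ℓ : ℝ) ^ (2 * (d + 1)) = ((ℓ : ℝ)) ^ (-2 : ℤ)) := by
  obtain ⟨e, rfl⟩ : ∃ e, d = e + 1 := ⟨d - 1, (Nat.succ_pred_eq_of_pos hd).symm⟩
  refine ⟨fun h => ?_, fun h1 h2 => ?_, fun h => ?_⟩
  · have hc : countDoubleRoot ℓ (e+1) n m = ℓ^(2*e) := by
      rw [count_eq ℓ hℓ.ne_zero e n m, card_ann_unit ℓ hℓ _ h, one_mul]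
    rw [hc]
    push_cast
    exact real_calc ℓ hℓ.ne_zero (2*e) (2*(e+1+1)) (-4) (by push_cast; ring)
  · have hc : countDoubleRoot ℓ (e+1) n m = ℓ^(2*e + 1) := by
      rw [count_eq ℓ hℓ.ne_zero e n m, card_ann_ell ℓ hℓ _ h1 h2]
      ring
    rw [hc]
    push_cast
    exact real_calc ℓ hℓ.ne_zero (2*e+1) (2*(e+1+1)) (-3) (by push_cast; ring)
  · have hc : countDoubleRoot ℓ (e+1) n m = ℓ^(2 + 2*e) := by
      rw [count_eq ℓ hℓ.ne_zero e n m, card_ann_zero ℓ hℓ _ h, ← pow_add]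
    rw [hc]
    push_cast
    exact real_calc ℓ hℓ.ne_zero (2+2*e) (2*(e+1+1)) (-2) (by push_cast; ring)
end
end

section
/- Let ℓ be a prime, d ≥ 1 an integer, and n ∈ ℤ. Then ∑_{g ∈ (ℤ/ℓ²ℤ)[t], deg(g) ≤ d, g(n) ≡ 0 mod ℓ²} ρ_g(ℓ²) = ℓ^{2d} (3 − 2/ℓ). -/
noncomputable section

/-- `ρ_g(ℓ²)` for a polynomial `g = ∑_{i=0}^{d} c_i t^i` with coefficients
`c : Fin (d+1) → ZMod (ℓ²)`: the number of roots of `g` in `ℤ/ℓ²ℤ`. -/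
def rhoCoeffs (ℓ d : ℕ) (c : Fin (d + 1) → ZMod (ℓ ^ 2)) : ℕ :=
  Nat.card {x : ZMod (ℓ ^ 2) | (∑ i, c i * x ^ (i : ℕ)) = 0}

open Finset in
/-- In `ZMod (ℓ^2)`, a nonzero element is a unit iff `ℓ` does not divide its value. -/
lemma zmod_unit_iff_not_dvd {ℓ : ℕ} (hℓ : ℓ.Prime) [NeZero (ℓ ^ 2)] (a : ZMod (ℓ ^ 2)) :
    IsUnit a ↔ ¬ ℓ ∣ a.val := by
  conv_lhs => rw [← ZMod.natCast_zmod_val a]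
  rw [ZMod.isUnit_iff_coprime]
  rw [Nat.coprime_pow_right_iff (by norm_num), Nat.coprime_comm,
    Nat.Prime.coprime_iff_not_dvd hℓ]

open Finset in
/-- The number of `v : ZMod (ℓ^2)` with `ℓ ∣ v.val` is `ℓ`. -/
lemma card_dvd_val {ℓ : ℕ} (hℓ : ℓ.Prime) [NeZero (ℓ ^ 2)] :
    (Finset.univ.filter (fun v : ZMod (ℓ ^ 2) => ℓ ∣ v.val)).card = ℓ := by
  have hℓ0 : 0 < ℓ := hℓ.pos
  have key : (Finset.univ.filter (fun v : ZMod (ℓ ^ 2) => ℓ ∣ v.val)).card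
      = (Finset.range ℓ).card := by
    apply Finset.card_bij' (fun v _ => v.val / ℓ) (fun i _ => ((ℓ * i : ℕ) : ZMod (ℓ ^ 2)))
    · intro v hv
      simp only [Finset.mem_filter, Finset.mem_univ, true_and] at hv
      have hval : v.val < ℓ * ℓ := by have := ZMod.val_lt v; nlinarith
      simp only [Finset.mem_range]
      exact Nat.div_lt_of_lt_mul hval
    · intro i hi
      simp only [Finset.mem_range] at hi
      have hlt : ℓ * i < ℓ ^ 2 := by
        nlinarith
      simp only [Finset.mem_filter, Finset.mem_univ, true_and]
      rw [ZMod.val_cast_of_lt hlt]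
      exact Dvd.intro i rfl
    · intro v hv
      simp only [Finset.mem_filter, Finset.mem_univ, true_and] at hv
      rw [Nat.mul_div_cancel' hv, ZMod.natCast_zmod_val]
    · intro i hi
      simp only [Finset.mem_range] at hi
      have hlt : ℓ * i < ℓ ^ 2 := by
        nlinarith
      rw [ZMod.val_cast_of_lt hlt, Nat.mul_div_cancel_left i hℓ0]
  rw [key, Finset.card_range]

open Finset in
/-- The number of solutions of `a * v = 0` in `ZMod (ℓ^2)`. -/
lemma card_ann {ℓ : ℕ} (hℓ : ℓ.Prime) [NeZero (ℓ ^ 2)] (a : ZMod (ℓ ^ 2)) :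
    (Finset.univ.filter (fun v : ZMod (ℓ ^ 2) => a * v = 0)).card
      = if a = 0 then ℓ ^ 2 else if IsUnit a then 1 else ℓ := by
  have hℓ0 : 0 < ℓ := hℓ.pos
  by_cases ha0 : a = 0
  · subst ha0
    simp [ZMod.card]
  · rw [if_neg ha0]
    by_cases hu : IsUnit a
    · rw [if_pos hu]
      have : Finset.univ.filter (fun v : ZMod (ℓ ^ 2) => a * v = 0) = {0} := by
        ext v; simp [hu.mul_right_eq_zero]
      rw [this, Finset.card_singleton]
    · rw [if_neg hu]
      -- here ℓ ∣ a.val, a.val = ℓ * m with m coprime to ℓ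
      have hdvd : ℓ ∣ a.val := by
        by_contra h
        exact hu ((zmod_unit_iff_not_dvd hℓ a).mpr h)
      obtain ⟨m, hm⟩ := hdvd
      have hmℓ : m < ℓ := by
        have : a.val < ℓ ^ 2 := ZMod.val_lt a
        rw [hm, sq] at this
        exact lt_of_mul_lt_mul_left this (Nat.zero_le ℓ)
      have hm0 : m ≠ 0 := by
        intro h
        apply ha0
        rw [← ZMod.natCast_zmod_val a, hm, h, Nat.mul_zero, Nat.cast_zero]
      have hcop : Nat.Coprime ℓ m := (Nat.Prime.coprime_iff_not_dvd hℓ).mpr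
        (fun h => hm0 (Nat.eq_zero_of_dvd_of_lt h hmℓ))
      -- a * v = 0 ↔ ℓ ∣ v.val
      have hiff : ∀ v : ZMod (ℓ ^ 2), a * v = 0 ↔ ℓ ∣ v.val := by
        intro v
        have hav : a * v = ((a.val * v.val : ℕ) : ZMod (ℓ ^ 2)) := by
          rw [Nat.cast_mul, ZMod.natCast_zmod_val, ZMod.natCast_zmod_val]
        have hdd : ∀ k : ℕ, ℓ ^ 2 ∣ ℓ * k ↔ ℓ ∣ k := by
          intro k; rw [sq, Nat.mul_dvd_mul_iff_left hℓ0]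
        rw [hav, ZMod.natCast_eq_zero_iff, hm, Nat.mul_assoc, hdd]
        exact ⟨fun h => hcop.dvd_of_dvd_mul_left h, fun h => h.mul_left m⟩
      have : Finset.univ.filter (fun v : ZMod (ℓ ^ 2) => a * v = 0)
          = Finset.univ.filter (fun v : ZMod (ℓ ^ 2) => ℓ ∣ v.val) := by
        ext v; simp [hiff v]
      rw [this, card_dvd_val hℓ]

open Finset in
/-- Sum over all `a` of the number of solutions of `a*v = 0`. -/
lemma sum_card_ann {ℓ : ℕ} (hℓ : ℓ.Prime) [NeZero (ℓ ^ 2)] :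
    (∑ a : ZMod (ℓ ^ 2),
        ((Finset.univ.filter (fun v : ZMod (ℓ ^ 2) => a * v = 0)).card : ℝ))
      = (ℓ : ℝ) ^ 2 + ((ℓ : ℝ) - 1) * ℓ + ((ℓ : ℝ) ^ 2 - ℓ) := by
  have hℓ0 : 0 < ℓ := hℓ.pos
  have h1 : (1 : ℕ) ≤ ℓ := hℓ0
  classical
  have hsum : ∀ a : ZMod (ℓ ^ 2),
      ((Finset.univ.filter (fun v : ZMod (ℓ ^ 2) => a * v = 0)).card : ℝ)
        = (if ℓ ∣ a.val then (if a = 0 then ((ℓ : ℝ) ^ 2) else (ℓ : ℝ)) else 1) := by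
    intro a
    rw [card_ann hℓ a]
    by_cases ha0 : a = 0
    · subst ha0
      have : ℓ ∣ (0 : ZMod (ℓ ^ 2)).val := by simp [ZMod.val_zero]
      simp [this]
    · rw [if_neg ha0, if_neg ha0]
      by_cases hu : IsUnit a
      · rw [if_pos hu, if_neg ((zmod_unit_iff_not_dvd hℓ a).mp hu), Nat.cast_one]
      · rw [if_neg hu, if_pos (by by_contra h; exact hu ((zmod_unit_iff_not_dvd hℓ a).mpr h))]
  rw [Finset.sum_congr rfl (fun a _ => hsum a)]
  rw [← Finset.sum_filter_add_sum_filter_not Finset.univ (fun a : ZMod (ℓ ^ 2) => ℓ ∣ a.val)]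
  have h0mem : (0 : ZMod (ℓ ^ 2)) ∈ Finset.univ.filter (fun a : ZMod (ℓ ^ 2) => ℓ ∣ a.val) := by
    simp [ZMod.val_zero]
  set s := Finset.univ.filter (fun a : ZMod (ℓ ^ 2) => ℓ ∣ a.val) with hs
  have hscard : s.card = ℓ := card_dvd_val hℓ
  have hfirst : (∑ a ∈ s,
      (if ℓ ∣ a.val then (if a = 0 then ((ℓ : ℝ) ^ 2) else (ℓ : ℝ)) else 1))
      = (ℓ : ℝ) ^ 2 + ((ℓ : ℝ) - 1) * ℓ := by
    have hcongr : ∀ a ∈ s,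
        (if ℓ ∣ a.val then (if a = 0 then ((ℓ : ℝ) ^ 2) else (ℓ : ℝ)) else 1)
          = (if a = 0 then ((ℓ : ℝ) ^ 2) else (ℓ : ℝ)) := by
      intro a ha
      rw [if_pos (Finset.mem_filter.mp ha).2]
    rw [Finset.sum_congr rfl hcongr, ← Finset.add_sum_erase s _ h0mem, if_pos rfl]
    have herase : ∀ a ∈ s.erase 0,
        (if a = (0 : ZMod (ℓ ^ 2)) then ((ℓ : ℝ) ^ 2) else (ℓ : ℝ)) = (ℓ : ℝ) := by
      intro a ha
      rw [if_neg (Finset.mem_erase.mp ha).1]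
    rw [Finset.sum_congr rfl herase, Finset.sum_const, Finset.card_erase_of_mem h0mem,
      hscard, nsmul_eq_mul, Nat.cast_sub h1, Nat.cast_one]
  have hsecond : (∑ a ∈ Finset.univ.filter (fun a : ZMod (ℓ ^ 2) => ¬ ℓ ∣ a.val),
      (if ℓ ∣ a.val then (if a = 0 then ((ℓ : ℝ) ^ 2) else (ℓ : ℝ)) else 1))
      = ((ℓ : ℝ) ^ 2 - ℓ) := by
    have hcongr : ∀ a ∈ Finset.univ.filter (fun a : ZMod (ℓ ^ 2) => ¬ ℓ ∣ a.val),
        (if ℓ ∣ a.val then (if a = 0 then ((ℓ : ℝ) ^ 2) else (ℓ : ℝ)) else 1) = (1 : ℝ) := by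
      intro a ha
      rw [if_neg (Finset.mem_filter.mp ha).2]
    rw [Finset.sum_congr rfl hcongr, Finset.sum_const, nsmul_eq_mul, mul_one]
    have hcards := Finset.card_filter_add_card_filter_not
      (s := (Finset.univ : Finset (ZMod (ℓ ^ 2)))) (p := fun a : ZMod (ℓ ^ 2) => ℓ ∣ a.val)
    rw [Finset.card_univ, ZMod.card, ← hs] at hcards
    have hle : ℓ ≤ ℓ ^ 2 := by nlinarith
    have : (Finset.univ.filter (fun a : ZMod (ℓ ^ 2) => ¬ ℓ ∣ a.val)).card = ℓ ^ 2 - ℓ := by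
      omega
    rw [this, Nat.cast_sub (by nlinarith [hℓ0] : ℓ ≤ ℓ ^ 2), Nat.cast_pow]
  rw [hfirst, hsecond]

/-- A non-dependent version of `Fin.cons`, to keep elaboration fast. -/
def mycons {α : Type*} {m : ℕ} (u : α) (w : Fin m → α) : Fin (m + 1) → α := Fin.cons u w

@[simp] lemma mycons_zero {α : Type*} {m : ℕ} (u : α) (w : Fin m → α) :
    mycons u w 0 = u := rfl

@[simp] lemma mycons_succ {α : Type*} {m : ℕ} (u : α) (w : Fin m → α) (i : Fin m) :
    mycons u w i.succ = w i := by simp [mycons]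

set_option maxHeartbeats 1000000 in
theorem local_sum_rho (ℓ : ℕ) (hℓ : ℓ.Prime) (d : ℕ) (hd : 1 ≤ d) (n : ℤ) :
    (∑ᶠ c : Fin (d + 1) → ZMod (ℓ ^ 2),
        (if (∑ i, c i * ((n : ZMod (ℓ ^ 2))) ^ (i : ℕ)) = 0
          then (rhoCoeffs ℓ d c : ℝ) else 0))
      = (ℓ : ℝ) ^ (2 * d) * (3 - 2 / (ℓ : ℝ)) := by
  haveI : NeZero (ℓ ^ 2) := ⟨pow_ne_zero 2 hℓ.pos.ne'⟩
  classical
  obtain ⟨e, rfl⟩ : ∃ e, d = e + 1 := ⟨d - 1, (Nat.succ_pred_eq_of_pos hd).symm⟩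
  set R := ZMod (ℓ ^ 2) with hR
  set nn : R := (n : ZMod (ℓ ^ 2)) with hnn
  rw [finsum_eq_sum_of_fintype]
  -- express rhoCoeffs as a sum of indicators
  have hrho : ∀ c : Fin (e + 1 + 1) → R,
      (rhoCoeffs ℓ (e + 1) c : ℝ)
        = ∑ x : R, (if (∑ i, c i * x ^ (i : ℕ)) = 0 then (1 : ℝ) else 0) := by
    intro c
    have h1 : rhoCoeffs ℓ (e + 1) c
        = (Finset.univ.filter (fun x : R => (∑ i, c i * x ^ (i : ℕ)) = 0)).card := by
      rw [rhoCoeffs, Nat.card_eq_fintype_card]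
      exact Fintype.card_subtype _
    rw [h1, Finset.card_filter, Nat.cast_sum]
    exact Finset.sum_congr rfl (fun x _ => by split <;> simp)
  have hstep1 : ∀ c : Fin (e + 1 + 1) → R,
      (if (∑ i, c i * nn ^ (i : ℕ)) = 0 then (rhoCoeffs ℓ (e + 1) c : ℝ) else 0)
        = ∑ x : R, (if ((∑ i, c i * nn ^ (i : ℕ)) = 0 ∧ (∑ i, c i * x ^ (i : ℕ)) = 0)
            then (1 : ℝ) else 0) := by
    intro c
    by_cases h : (∑ i, c i * nn ^ (i : ℕ)) = 0
    · rw [if_pos h, hrho c]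
      exact Finset.sum_congr rfl (fun x _ => by simp [h])
    · rw [if_neg h]
      symm
      exact Finset.sum_eq_zero (fun x _ => by simp [h])
  rw [Finset.sum_congr rfl (fun c _ => hstep1 c), Finset.sum_comm]
  -- sums over pi types split off the first coordinate
  have hpi : ∀ (m : ℕ) (F : (Fin (m + 1) → R) → ℝ),
      ∑ c, F c = ∑ u : R, ∑ w : Fin m → R, F (mycons u w) := by
    intro m F
    rw [← Equiv.sum_comp (Fin.consEquiv fun _ => R) F, Fintype.sum_prod_type]; rfl
  have hexpand : ∀ (y : R) (u v : R) (w : Fin e → R),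
      (∑ i, mycons u (mycons v w) i * y ^ (i : ℕ))
        = u + v * y + ∑ i : Fin e, w i * y ^ ((i : ℕ) + 2) := by
    intro y u v w
    rw [Fin.sum_univ_succ, Fin.sum_univ_succ]
    simp only [mycons_zero, mycons_succ, Fin.val_zero, pow_zero, mul_one, Fin.val_succ,
      pow_one, zero_add]
    simp only [show ∀ i : Fin e, ((i : ℕ) + 1 + 1) = ((i : ℕ) + 2) from fun i => rfl]
    ring
  have key : ∀ x : R,
      (∑ c : Fin (e + 1 + 1) → R,
          (if ((∑ i, c i * nn ^ (i : ℕ)) = 0 ∧ (∑ i, c i * x ^ (i : ℕ)) = 0)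
            then (1 : ℝ) else 0))
        = ((ℓ : ℝ) ^ 2) ^ e *
            ((Finset.univ.filter (fun v : R => (x - nn) * v = 0)).card : ℝ) := by
    intro x
    set P : (Fin e → R) → R := fun w => ∑ i : Fin e, w i * nn ^ ((i : ℕ) + 2) with hP
    set Q : (Fin e → R) → R := fun w => ∑ i : Fin e, w i * x ^ ((i : ℕ) + 2) with hQ
    rw [hpi]
    have hinner : ∀ u : R,
        (∑ w : Fin (e + 1) → R,
          (if ((∑ i, mycons u w i * nn ^ (i : ℕ)) = 0
              ∧ (∑ i, mycons u w i * x ^ (i : ℕ)) = 0) then (1 : ℝ) else 0))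
        = ∑ v : R, ∑ w : Fin e → R,
            (if ((∑ i, mycons u (mycons v w) i * nn ^ (i : ℕ)) = 0
              ∧ (∑ i, mycons u (mycons v w) i * x ^ (i : ℕ)) = 0) then (1 : ℝ) else 0) :=
      fun u => hpi e _
    rw [Finset.sum_congr rfl (fun u _ => hinner u)]
    -- rewrite the conditions
    have hcond : ∀ (u v : R) (w : Fin e → R),
        ((∑ i, mycons u (mycons v w) i * nn ^ (i : ℕ)) = 0
            ∧ (∑ i, mycons u (mycons v w) i * x ^ (i : ℕ)) = 0)
          ↔ (u = -(v * nn + P w) ∧ (x - nn) * v = P w - Q w) := by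
      intro u v w
      rw [hexpand nn u v w, hexpand x u v w]
      constructor
      · rintro ⟨h1, h2⟩
        exact ⟨by linear_combination h1, by linear_combination h2 - h1⟩
      · rintro ⟨h1, h2⟩
        exact ⟨by linear_combination h1, by linear_combination h1 + h2⟩
    have hswap : (∑ u : R, ∑ v : R, ∑ w : Fin e → R,
          (if ((∑ i, mycons u (mycons v w) i * nn ^ (i : ℕ)) = 0
            ∧ (∑ i, mycons u (mycons v w) i * x ^ (i : ℕ)) = 0) then (1 : ℝ) else 0))
        = ∑ v : R, ∑ w : Fin e → R, ∑ u : R,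
          (if ((∑ i, mycons u (mycons v w) i * nn ^ (i : ℕ)) = 0
            ∧ (∑ i, mycons u (mycons v w) i * x ^ (i : ℕ)) = 0) then (1 : ℝ) else 0) := by
      rw [Finset.sum_comm]
      exact Finset.sum_congr rfl (fun v _ => Finset.sum_comm)
    rw [hswap]
    have hsum2 : ∀ (v : R) (w : Fin e → R),
        (∑ u : R, (if ((∑ i, mycons u (mycons v w) i * nn ^ (i : ℕ)) = 0
            ∧ (∑ i, mycons u (mycons v w) i * x ^ (i : ℕ)) = 0) then (1 : ℝ) else 0))
          = (if (x - nn) * v = P w - Q w then (1 : ℝ) else 0) := by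
      intro v w
      rw [Finset.sum_congr rfl (fun u _ => by rw [if_congr (hcond u v w) rfl rfl])]
      by_cases hq : (x - nn) * v = P w - Q w
      · simp [hq]
        convert Finset.sum_ite_eq' Finset.univ (-P w + -(v * nn)) (fun _ => (1 : ℝ)) using 1 <;> simp
      · simp [hq]
    rw [Finset.sum_congr rfl (fun v _ => Finset.sum_congr rfl (fun w _ => hsum2 v w)),
      Finset.sum_comm]
    -- now for each w, shift v
    have hsum3 : ∀ w : Fin e → R,
        (∑ v : R, (if (x - nn) * v = P w - Q w then (1 : ℝ) else 0))
          = ((Finset.univ.filter (fun v : R => (x - nn) * v = 0)).card : ℝ) := by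
      intro w
      have hdvd : (x - nn) ∣ (Q w - P w) := by
        rw [hQ, hP]
        simp only
        rw [← Finset.sum_sub_distrib]
        apply Finset.dvd_sum
        intro i _
        rw [← mul_sub]
        exact ((sub_dvd_pow_sub_pow x nn ((i : ℕ) + 2)).mul_left (w i))
      obtain ⟨K, hK⟩ := hdvd
      have hshift : ∀ v : R, ((x - nn) * v = P w - Q w) ↔ ((x - nn) * (v + K) = 0) := by
        intro v
        constructor
        · intro h; linear_combination h - hK
        · intro h; linear_combination h + hK
      rw [Finset.sum_congr rfl (fun v _ => by rw [if_congr (hshift v) rfl rfl])]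
      rw [show (∑ v : R, (if (x - nn) * (v + K) = 0 then (1 : ℝ) else 0))
          = ∑ v : R, (if (x - nn) * v = 0 then (1 : ℝ) else 0) from
        Equiv.sum_comp (Equiv.addRight K) (fun v => if (x - nn) * v = 0 then (1 : ℝ) else 0)]
      rw [Finset.sum_boole]
    rw [Finset.sum_congr rfl (fun w _ => hsum3 w), Finset.sum_const, nsmul_eq_mul]
    congr 1
    have hcardR : Fintype.card R = ℓ ^ 2 := ZMod.card (ℓ ^ 2)
    rw [Finset.card_univ, Fintype.card_fun, Fintype.card_fin, hcardR]
    push_cast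
    ring
  rw [Finset.sum_congr rfl (fun x _ => key x), ← Finset.mul_sum]
  rw [show (∑ x : R, ((Finset.univ.filter (fun v : R => (x - nn) * v = 0)).card : ℝ))
      = ∑ a : R, ((Finset.univ.filter (fun v : R => a * v = 0)).card : ℝ) from
    Equiv.sum_comp (Equiv.subRight nn)
      (fun a : R => ((Finset.univ.filter (fun v : R => a * v = 0)).card : ℝ))]
  rw [hR] at *
  rw [sum_card_ann hℓ]
  have hℓR : (ℓ : ℝ) ≠ 0 := Nat.cast_ne_zero.mpr hℓ.pos.ne'
  rw [pow_mul]
  field_simp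
  ring
end
end

section
/- Let ℓ be a prime and d ≥ 1 an integer. Then ∑_{g ∈ (ℤ/ℓ²ℤ)[t], deg(g) ≤ d} ρ_g(ℓ²)² = ℓ^{2d+2} (3 − 2/ℓ). -/
noncomputable section

section AuxLemmas
open Finset

namespace LocalAux

variable {ℓ : ℕ} [NeZero ℓ]

lemma ell_dvd_val_iff (hℓ : ℓ.Prime) (z : ZMod (ℓ ^ 2)) :
    (ℓ : ZMod (ℓ ^ 2)) * z = 0 ↔ ℓ ∣ z.val := by
  conv_lhs => rw [← ZMod.natCast_zmod_val z, ← Nat.cast_mul,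
    ZMod.natCast_eq_zero_iff]
  constructor
  · rintro ⟨k, hk⟩
    refine ⟨k, Nat.eq_of_mul_eq_mul_left hℓ.pos ?_⟩
    rw [hk]; ring
  · rintro ⟨k, hk⟩
    exact ⟨k, by rw [hk]; ring⟩

lemma card_ker (hℓ : ℓ.Prime) :
    (Finset.univ.filter fun b : ZMod (ℓ ^ 2) => (ℓ : ZMod (ℓ ^ 2)) * b = 0).card = ℓ := by
  have hl : 0 < ℓ := hℓ.pos
  have key : (Finset.univ.filter fun b : ZMod (ℓ ^ 2) => (ℓ : ZMod (ℓ ^ 2)) * b = 0).card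
      = (Finset.univ : Finset (ZMod ℓ)).card := by
    apply Finset.card_bij' (i := fun b _ => ((b.val / ℓ : ℕ) : ZMod ℓ))
      (j := fun k _ => ((ℓ * k.val : ℕ) : ZMod (ℓ ^ 2)))
    · intro b hb
      exact Finset.mem_univ _
    · intro k hk
      simp only [Finset.mem_filter, Finset.mem_univ, true_and]
      rw [← Nat.cast_mul, show ℓ * (ℓ * k.val) = ℓ ^ 2 * k.val by ring,
        Nat.cast_mul]
      simp
    · intro b hb
      simp only [Finset.mem_filter, Finset.mem_univ, true_and] at hb
      rw [ell_dvd_val_iff hℓ] at hb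
      have h1 : b.val / ℓ < ℓ :=
        Nat.div_lt_of_lt_mul (lt_of_lt_of_le (ZMod.val_lt b) (le_of_eq (pow_two ℓ)))
      rw [ZMod.val_natCast_of_lt h1, Nat.mul_div_cancel' hb, ZMod.natCast_zmod_val]
    · intro k hk
      have h2 : ℓ * k.val < ℓ ^ 2 :=
        lt_of_lt_of_le ((Nat.mul_lt_mul_left hl).mpr (ZMod.val_lt k)) (le_of_eq (pow_two ℓ).symm)
      rw [ZMod.val_natCast_of_lt h2, Nat.mul_div_cancel_left _ hl, ZMod.natCast_zmod_val]
  rw [key, Finset.card_univ, ZMod.card]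

end LocalAux

namespace LocalAux
variable {ℓ : ℕ} [NeZero ℓ]

def M (ℓ : ℕ) (z : ZMod (ℓ ^ 2)) : ℕ :=
  if z = 0 then ℓ ^ 2 else if (ℓ : ZMod (ℓ ^ 2)) * z = 0 then ℓ else 1

lemma sum_ker (hℓ : ℓ.Prime) :
    (∑ b : ZMod (ℓ ^ 2), if (ℓ : ZMod (ℓ ^ 2)) * b = 0 then 1 else 0) = ℓ := by
  rw [← Finset.card_filter]
  exact card_ker hℓ

lemma isUnit_of_mul_ne_zero (hℓ : ℓ.Prime) {z : ZMod (ℓ ^ 2)}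
    (h : (ℓ : ZMod (ℓ ^ 2)) * z ≠ 0) : IsUnit z := by
  rw [Ne, ell_dvd_val_iff hℓ] at h
  rw [← ZMod.natCast_zmod_val z, ZMod.isUnit_iff_coprime]
  exact Nat.Coprime.pow_right _ (((Nat.Prime.coprime_iff_not_dvd hℓ).mpr h).symm)

lemma exists_unit (hℓ : ℓ.Prime) {z : ZMod (ℓ ^ 2)} (h0 : z ≠ 0)
    (h : (ℓ : ZMod (ℓ ^ 2)) * z = 0) :
    ∃ u : ZMod (ℓ ^ 2), IsUnit u ∧ z = (ℓ : ZMod (ℓ ^ 2)) * u := by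
  rw [ell_dvd_val_iff hℓ] at h
  obtain ⟨k, hk⟩ := h
  have hkl : k < ℓ := by
    by_contra hkl
    have h1 : ℓ ^ 2 ≤ z.val := by
      rw [hk, pow_two]; exact Nat.mul_le_mul_left ℓ (le_of_not_gt hkl)
    exact absurd (ZMod.val_lt z) (not_lt.mpr h1)
  have hk0 : k ≠ 0 := by
    rintro rfl
    apply h0
    rw [← ZMod.natCast_zmod_val z, hk]; simp
  refine ⟨(k : ZMod (ℓ ^ 2)), ?_, ?_⟩
  · rw [ZMod.isUnit_iff_coprime]
    refine Nat.Coprime.pow_right _ (((Nat.Prime.coprime_iff_not_dvd hℓ).mpr ?_).symm)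
    intro hdvd
    exact absurd (Nat.le_of_dvd (Nat.pos_of_ne_zero hk0) hdvd) (not_le.mpr hkl)
  · rw [← ZMod.natCast_zmod_val z, hk]; push_cast; ring

lemma count_b (hℓ : ℓ.Prime) (z w : ZMod (ℓ ^ 2)) (h : z ∣ w) :
    (∑ b : ZMod (ℓ ^ 2), if b * z = w then 1 else 0) = M ℓ z := by
  rcases eq_or_ne z 0 with rfl | h0
  · obtain rfl : w = 0 := zero_dvd_iff.mp h
    simp [M, Finset.card_univ, ZMod.card]
  · rw [M, if_neg h0]
    by_cases hr : (ℓ : ZMod (ℓ ^ 2)) * z = 0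
    · rw [if_pos hr]
      obtain ⟨s, rfl⟩ := h
      obtain ⟨u, hu, rfl⟩ := exists_unit hℓ h0 hr
      have hcond : ∀ b : ZMod (ℓ ^ 2),
          (b * ((ℓ : ZMod (ℓ ^ 2)) * u) = (ℓ : ZMod (ℓ ^ 2)) * u * s) ↔
            ((ℓ : ZMod (ℓ ^ 2)) * (b - s) = 0) := by
        intro b
        constructor
        · intro hb
          have h2 : ((ℓ : ZMod (ℓ ^ 2)) * (b - s)) * u = 0 := by linear_combination hb
          exact (IsUnit.mul_left_eq_zero hu).mp h2
        · intro hb; linear_combination u * hb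
      simp only [hcond]
      rw [show (∑ x : ZMod (ℓ ^ 2), if (ℓ : ZMod (ℓ ^ 2)) * (x - s) = 0 then 1 else 0)
          = ∑ c : ZMod (ℓ ^ 2), if (ℓ : ZMod (ℓ ^ 2)) * c = 0 then 1 else 0 from
        Fintype.sum_equiv (Equiv.subRight s) _ _ (fun b => rfl)]
      exact sum_ker hℓ
    · rw [if_neg hr]
      obtain ⟨u, rfl⟩ := isUnit_of_mul_ne_zero hℓ hr
      have hcond : ∀ b : ZMod (ℓ ^ 2),
          (b * (u : ZMod (ℓ ^ 2)) = w) ↔ b = w * ((u⁻¹ : (ZMod (ℓ ^ 2))ˣ) : ZMod (ℓ ^ 2)) := by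
        intro b; exact (Units.eq_mul_inv_iff_mul_eq u).symm
      simp only [hcond]
      rw [Finset.sum_ite_eq' Finset.univ (w * ((u⁻¹ : (ZMod (ℓ ^ 2))ˣ) : ZMod (ℓ ^ 2))) (fun _ => 1)]
      simp

end LocalAux

namespace LocalAux
variable {ℓ : ℕ} [NeZero ℓ]

lemma sum_M (hℓ : ℓ.Prime) :
    (∑ z : ZMod (ℓ ^ 2), M ℓ z) = (ℓ ^ 2 - ℓ) + (ℓ - 1) * ℓ + ℓ ^ 2 := by
  have hle : ℓ ≤ ℓ ^ 2 := Nat.le_self_pow two_ne_zero ℓ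
  have h1 : 1 ≤ ℓ := hℓ.pos
  have hpt : ∀ z : ZMod (ℓ ^ 2), M ℓ z
      = ((if z = 0 then ℓ ^ 2 - ℓ else 0)
        + (if (ℓ : ZMod (ℓ ^ 2)) * z = 0 then ℓ - 1 else 0) + 1) := by
    intro z
    rcases eq_or_ne z 0 with rfl | h0
    · simp [M]
      omega
    · rw [M, if_neg h0, if_neg h0]
      by_cases hr : (ℓ : ZMod (ℓ ^ 2)) * z = 0 <;> simp [hr] <;> omega
  simp only [hpt]
  rw [Finset.sum_add_distrib, Finset.sum_add_distrib,
    Finset.sum_ite_eq' Finset.univ (0 : ZMod (ℓ ^ 2)) (fun _ => ℓ ^ 2 - ℓ),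
    Finset.sum_ite, Finset.sum_const, Finset.sum_const,
    card_ker hℓ]
  simp [Finset.card_univ, ZMod.card, Nat.mul_comm]

lemma sum_pi_succ {n : ℕ} {α : Type*} [Fintype α] {N : Type*} [AddCommMonoid N]
    (f : (Fin (n + 1) → α) → N) :
    ∑ c : Fin (n + 1) → α, f c = ∑ a : α, ∑ t : Fin n → α, f (Fin.cons a t) := by
  rw [← (Fin.consEquiv (fun _ : Fin (n + 1) => α)).sum_comp f, Fintype.sum_prod_type]
  rfl

lemma eval_cons {n : ℕ} {R : Type*} [CommRing R] (x a b : R) (t : Fin n → R) :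
    (∑ i : Fin (n + 2), (Fin.cons a (Fin.cons b t) : Fin (n + 2) → R) i * x ^ (i : ℕ))
      = a + b * x + ∑ i : Fin n, t i * x ^ ((i : ℕ) + 1 + 1) := by
  rw [Fin.sum_univ_succ, Fin.sum_univ_succ]
  simp only [Fin.cons_zero, Fin.cons_succ, Fin.val_zero, pow_zero, mul_one, Fin.val_succ,
    zero_add, pow_one, add_assoc]

lemma count_ab (hℓ : ℓ.Prime) (x y A B : ZMod (ℓ ^ 2)) (hdvd : (y - x) ∣ (A - B)) :
    (∑ b : ZMod (ℓ ^ 2), ∑ a : ZMod (ℓ ^ 2),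
        if a + b * x + A = 0 ∧ a + b * y + B = 0 then 1 else 0) = M ℓ (y - x) := by
  have hiff : ∀ a b : ZMod (ℓ ^ 2),
      (a + b * x + A = 0 ∧ a + b * y + B = 0)
        ↔ (a = -(b * x + A) ∧ b * (y - x) = A - B) := by
    intro a b
    constructor
    · rintro ⟨h1, h2⟩
      exact ⟨by linear_combination h1, by linear_combination h2 - h1⟩
    · rintro ⟨ha, hb⟩
      subst ha
      exact ⟨by ring, by linear_combination hb⟩
  simp only [hiff, ite_and]
  have hin : ∀ b : ZMod (ℓ ^ 2),
      (∑ a : ZMod (ℓ ^ 2), if a = -(b * x + A)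
          then (if b * (y - x) = A - B then 1 else 0) else 0)
        = (if b * (y - x) = A - B then 1 else 0) := by
    intro b
    rw [Finset.sum_ite_eq' Finset.univ]
    simp
  simp only [hin]
  exact count_b hℓ _ _ hdvd

end LocalAux

namespace LocalAux
variable {ℓ : ℕ} [NeZero ℓ]

lemma inner_sum (hℓ : ℓ.Prime) (e : ℕ) (x y : ZMod (ℓ ^ 2)) :
    (∑ c : Fin (e + 2) → ZMod (ℓ ^ 2),
        if (∑ i, c i * x ^ (i : ℕ)) = 0 ∧ (∑ i, c i * y ^ (i : ℕ)) = 0 then 1 else 0)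
      = (ℓ ^ 2) ^ e * M ℓ (y - x) := by
  rw [sum_pi_succ]
  refine (Finset.sum_congr rfl fun a _ => sum_pi_succ _).trans ?_
  simp only [eval_cons]
  rw [Finset.sum_comm]
  refine (Finset.sum_congr rfl fun b _ => Finset.sum_comm).trans ?_
  rw [Finset.sum_comm]
  have hcnt : ∀ t : Fin e → ZMod (ℓ ^ 2),
      (∑ b : ZMod (ℓ ^ 2), ∑ a : ZMod (ℓ ^ 2),
        if a + b * x + (∑ i : Fin e, t i * x ^ ((i : ℕ) + 1 + 1)) = 0
          ∧ a + b * y + (∑ i : Fin e, t i * y ^ ((i : ℕ) + 1 + 1)) = 0 then 1 else 0)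
      = M ℓ (y - x) := by
    intro t
    refine count_ab hℓ x y _ _ ?_
    rw [← Finset.sum_sub_distrib, show y - x = -(x - y) by ring, neg_dvd]
    refine Finset.dvd_sum fun i _ => ?_
    rw [← mul_sub]
    exact Dvd.dvd.mul_left (sub_dvd_pow_sub_pow x y _) (t i)
  simp only [hcnt]
  rw [Finset.sum_const, Finset.card_univ]
  simp [ZMod.card, Fintype.card_fun, mul_comm]

lemma key (hℓ : ℓ.Prime) (e : ℕ) :
    (∑ c : Fin (e + 2) → ZMod (ℓ ^ 2),
        ((Finset.univ.filter fun x : ZMod (ℓ ^ 2) => (∑ i, c i * x ^ (i : ℕ)) = 0).card) ^ 2)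
      = ℓ ^ 2 * ((ℓ ^ 2) ^ e * ((ℓ ^ 2 - ℓ) + (ℓ - 1) * ℓ + ℓ ^ 2)) := by
  have hmul : ∀ (p q : Prop) [Decidable p] [Decidable q],
      (if p then (1 : ℕ) else 0) * (if q then 1 else 0) = if p ∧ q then 1 else 0 := by
    intro p q _ _
    by_cases hp : p <;> by_cases hq : q <;> simp [hp, hq]
  have hsq : ∀ c : Fin (e + 2) → ZMod (ℓ ^ 2),
      ((Finset.univ.filter fun x : ZMod (ℓ ^ 2) => (∑ i, c i * x ^ (i : ℕ)) = 0).card) ^ 2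
        = ∑ x : ZMod (ℓ ^ 2), ∑ y : ZMod (ℓ ^ 2),
            if (∑ i, c i * x ^ (i : ℕ)) = 0 ∧ (∑ i, c i * y ^ (i : ℕ)) = 0 then 1 else 0 := by
    intro c
    rw [Finset.card_filter, pow_two, Finset.sum_mul_sum]
    simp only [hmul]
  simp only [hsq]
  rw [Finset.sum_comm]
  refine (Finset.sum_congr rfl fun x _ => Finset.sum_comm).trans ?_
  simp only [inner_sum hℓ e]
  have hswap : ∀ x : ZMod (ℓ ^ 2), (∑ y : ZMod (ℓ ^ 2), M ℓ (y - x)) = ∑ z : ZMod (ℓ ^ 2), M ℓ z :=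
    fun x => Fintype.sum_equiv (Equiv.subRight x) _ _ (fun y => rfl)
  calc ∑ x : ZMod (ℓ ^ 2), ∑ y : ZMod (ℓ ^ 2), (ℓ ^ 2) ^ e * M ℓ (y - x)
      = ∑ _x : ZMod (ℓ ^ 2), (ℓ ^ 2) ^ e * ((ℓ ^ 2 - ℓ) + (ℓ - 1) * ℓ + ℓ ^ 2) := by
        refine Finset.sum_congr rfl fun x _ => ?_
        rw [← Finset.mul_sum, hswap x, sum_M hℓ]
    _ = ℓ ^ 2 * ((ℓ ^ 2) ^ e * ((ℓ ^ 2 - ℓ) + (ℓ - 1) * ℓ + ℓ ^ 2)) := by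
        rw [Finset.sum_const, Finset.card_univ, ZMod.card, smul_eq_mul]

end LocalAux

theorem local_sum_rho_sq (ℓ : ℕ) (hℓ : ℓ.Prime) (d : ℕ) (hd : 1 ≤ d) :
    (∑ᶠ c : Fin (d + 1) → ZMod (ℓ ^ 2), ((rhoCoeffs ℓ d c : ℝ)) ^ 2)
      = (ℓ : ℝ) ^ (2 * d + 2) * (3 - 2 / (ℓ : ℝ)) := by
  haveI : NeZero ℓ := ⟨hℓ.ne_zero⟩
  obtain ⟨e, rfl⟩ : ∃ e, d = e + 1 := ⟨d - 1, by omega⟩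
  rw [finsum_eq_sum_of_fintype]
  have hrho : ∀ c : Fin (e + 1 + 1) → ZMod (ℓ ^ 2), rhoCoeffs ℓ (e + 1) c
      = ((Finset.univ.filter fun x : ZMod (ℓ ^ 2) => (∑ i, c i * x ^ (i : ℕ)) = 0).card) := by
    intro c
    have hset : {x : ZMod (ℓ ^ 2) | (∑ i, c i * x ^ (i : ℕ)) = 0}
        = ↑(Finset.univ.filter fun x : ZMod (ℓ ^ 2) => (∑ i, c i * x ^ (i : ℕ)) = 0) := by
      ext x; simp
    rw [rhoCoeffs, hset, Nat.card_coe_set_eq, Set.ncard_coe_finset]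
  have hcast : (∑ c : Fin (e + 1 + 1) → ZMod (ℓ ^ 2), ((rhoCoeffs ℓ (e + 1) c : ℝ)) ^ 2)
      = ((∑ c : Fin (e + 1 + 1) → ZMod (ℓ ^ 2), (rhoCoeffs ℓ (e + 1) c) ^ 2 : ℕ) : ℝ) := by
    push_cast
    rfl
  rw [hcast]
  have hkey : (∑ c : Fin (e + 1 + 1) → ZMod (ℓ ^ 2), (rhoCoeffs ℓ (e + 1) c) ^ 2 : ℕ)
      = ℓ ^ 2 * ((ℓ ^ 2) ^ e * ((ℓ ^ 2 - ℓ) + (ℓ - 1) * ℓ + ℓ ^ 2)) := by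
    simp only [hrho]
    exact LocalAux.key hℓ e
  rw [hkey]
  have hle : ℓ ≤ ℓ ^ 2 := Nat.le_self_pow two_ne_zero ℓ
  have h1 : 1 ≤ ℓ := hℓ.pos
  have hl0 : (ℓ : ℝ) ≠ 0 := Nat.cast_ne_zero.mpr hℓ.ne_zero
  push_cast [Nat.cast_sub hle, Nat.cast_sub h1]
  field_simp
  ring
end AuxLemmas
end
end

section
/- For all θ ∈ [0,2], T ≥ 2 and real y > 0 with y ≠ 1, the integral over the vertical half-lines {s : Re(s) = θ, |Im(s)| ≥ T} of y^s / (s(s+1)) ds satisfies the bound ≪ y^θ / (T² |log y|), with an absolute implied constant. -/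
open Complex MeasureTheory Set Filter Topology

noncomputable section

private lemma tail_core (θ T L : ℝ) (σ : ℂ) (hσ : σ = I ∨ σ = -I)
    (hθ0 : 0 ≤ θ) (hθ2 : θ ≤ 2) (hT : 2 ≤ T) (hL : L ≠ 0) :
    IntegrableOn (fun t : ℝ => Complex.exp ((L : ℂ) * ((θ : ℂ) + σ * t)) /
        (((θ : ℂ) + σ * t) * ((θ : ℂ) + σ * t + 1)) * I) (Set.Ioi T) ∧
      ‖∫ t in Set.Ioi T, Complex.exp ((L : ℂ) * ((θ : ℂ) + σ * t)) /
        (((θ : ℂ) + σ * t) * ((θ : ℂ) + σ * t + 1)) * I‖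
      ≤ 4 * Real.exp (L * θ) / (T ^ 2 * |L|) := by
  have hσ0 : σ ≠ 0 := by rcases hσ with h | h <;> simp [h, I_ne_zero]
  have hσre : σ.re = 0 := by rcases hσ with h | h <;> simp [h]
  have hσim : |σ.im| = 1 := by rcases hσ with h | h <;> simp [h]
  have hnσ : ‖σ‖ = 1 := by rcases hσ with h | h <;> simp [h]
  have hLC : (L : ℂ) ≠ 0 := by exact_mod_cast hL
  have hLpos : 0 < |L| := abs_pos.mpr hL
  have hT0 : (0:ℝ) < T := by linarith
  set E : ℝ := Real.exp (L * θ) with hEdef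
  have hE0 : 0 < E := Real.exp_pos _
  set f : ℝ → ℂ := fun t => Complex.exp ((L : ℂ) * ((θ : ℂ) + σ * t)) /
      (((θ : ℂ) + σ * t) * ((θ : ℂ) + σ * t + 1)) * I with hfdef
  set g : ℝ → ℂ := fun t => Complex.exp ((L : ℂ) * ((θ : ℂ) + σ * t)) * I *
      (2 * ((θ : ℂ) + σ * t) + 1) / ((((θ : ℂ) + σ * t) * ((θ : ℂ) + σ * t + 1)) ^ 2 * (L : ℂ))
      with hgdef
  set F : ℝ → ℂ := fun t => Complex.exp ((L : ℂ) * ((θ : ℂ) + σ * t)) * I /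
      (((θ : ℂ) + σ * t) * ((θ : ℂ) + σ * t + 1) * (σ * (L : ℂ))) with hFdef
  have hEnorm : ∀ t : ℝ, ‖Complex.exp ((L : ℂ) * ((θ : ℂ) + σ * t))‖ = E := by
    intro t
    rw [Complex.norm_exp, hEdef]
    congr 1
    simp [Complex.mul_re, Complex.add_re, Complex.add_im, Complex.mul_im, hσre]
  have hSnorm : ∀ t : ℝ, 2 ≤ t → t ≤ ‖(θ : ℂ) + σ * t‖ := by
    intro t ht
    have h1 : |((θ : ℂ) + σ * t).im| ≤ ‖(θ : ℂ) + σ * t‖ := by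
      exact Complex.abs_im_le_norm _
    have h2 : ((θ : ℂ) + σ * t).im = σ.im * t := by
      simp [Complex.add_im, Complex.mul_im]
    rw [h2, abs_mul, hσim, one_mul] at h1
    calc t = |t| := (abs_of_pos (by linarith)).symm
    _ ≤ _ := h1
  have hSnorm1 : ∀ t : ℝ, 2 ≤ t → t ≤ ‖(θ : ℂ) + σ * t + 1‖ := by
    intro t ht
    have h1 : |((θ : ℂ) + σ * t + 1).im| ≤ ‖(θ : ℂ) + σ * t + 1‖ := by
      exact Complex.abs_im_le_norm _
    have h2 : ((θ : ℂ) + σ * t + 1).im = σ.im * t := by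
      simp [Complex.add_im, Complex.mul_im]
    rw [h2, abs_mul, hσim, one_mul] at h1
    calc t = |t| := (abs_of_pos (by linarith)).symm
    _ ≤ _ := h1
  have hS0 : ∀ t : ℝ, 2 ≤ t → (θ : ℂ) + σ * t ≠ 0 := by
    intro t ht h
    have := hSnorm t ht
    rw [h, norm_zero] at this; linarith
  have hS1 : ∀ t : ℝ, 2 ≤ t → (θ : ℂ) + σ * t + 1 ≠ 0 := by
    intro t ht h
    have := hSnorm1 t ht
    rw [h, norm_zero] at this; linarith
  have hSub : ∀ t : ℝ, 0 ≤ t → ‖(θ : ℂ) + σ * t‖ ≤ 2 + t := by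
    intro t ht
    calc ‖(θ : ℂ) + σ * t‖ ≤ ‖(θ : ℂ)‖ + ‖σ * (t : ℂ)‖ := norm_add_le _ _
    _ = |θ| + ‖σ‖ * |t| := by
        rw [norm_mul, Complex.norm_real, Complex.norm_real, Real.norm_eq_abs, Real.norm_eq_abs]
    _ = θ + t := by rw [hnσ, one_mul, _root_.abs_of_nonneg hθ0, _root_.abs_of_nonneg ht]
    _ ≤ 2 + t := by linarith
  have h2S : ∀ t : ℝ, 2 ≤ t → ‖2 * ((θ : ℂ) + σ * t) + 1‖ ≤ 5 * t := by
    intro t ht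
    calc ‖2 * ((θ : ℂ) + σ * t) + 1‖ ≤ ‖(2:ℂ) * ((θ : ℂ) + σ * t)‖ + ‖(1 : ℂ)‖ := norm_add_le _ _
    _ ≤ 2 * (2 + t) + 1 := by
        rw [norm_mul, norm_one]
        have := hSub t (by linarith)
        have h2 : ‖(2:ℂ)‖ = 2 := by norm_num
        rw [h2]
        nlinarith [norm_nonneg ((θ:ℂ) + σ * t)]
    _ ≤ 5 * t := by nlinarith
  -- pointwise bound for f
  have hfbound : ∀ t : ℝ, 2 ≤ t → ‖f t‖ ≤ E * t ^ (-2 : ℝ) := by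
    intro t ht
    have ht0 : (0:ℝ) < t := by linarith
    have hrw : t ^ (-2 : ℝ) = (t * t)⁻¹ := by
      rw [show (-2 : ℝ) = -((2:ℕ):ℝ) by norm_num, Real.rpow_neg ht0.le, Real.rpow_natCast]
      norm_num [sq, pow_succ]
    have hmul : t * t ≤ ‖(θ:ℂ) + σ * t‖ * ‖(θ:ℂ) + σ * t + 1‖ :=
      mul_le_mul (hSnorm t ht) (hSnorm1 t ht) ht0.le (norm_nonneg _)
    have h1 : ‖f t‖ = E / (‖(θ:ℂ) + σ * t‖ * ‖(θ:ℂ) + σ * t + 1‖) := by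
      rw [hfdef]
      simp only [norm_mul, norm_div, Complex.norm_I, mul_one, hEnorm]
    rw [h1, hrw, ← div_eq_mul_inv]
    exact (div_le_div_iff_of_pos_left hE0 (by nlinarith) (by nlinarith)).mpr hmul
  -- pointwise bound for g
  have hgbound : ∀ t : ℝ, 2 ≤ t → ‖g t‖ ≤ (5 * E / |L|) * t ^ (-3 : ℝ) := by
    intro t ht
    have ht0 : (0:ℝ) < t := by linarith
    have hrw : t ^ (-3 : ℝ) = (t * (t * t) * t)⁻¹ * t := by
      rw [show (-3 : ℝ) = -((3:ℕ):ℝ) by norm_num, Real.rpow_neg ht0.le, Real.rpow_natCast]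
      field_simp
    have h1 : ‖g t‖ = E * ‖2 * ((θ:ℂ) + σ * t) + 1‖ /
        ((‖(θ:ℂ) + σ * t‖ * ‖(θ:ℂ) + σ * t + 1‖) ^ 2 * |L|) := by
      rw [hgdef]
      simp only [norm_mul, norm_div, Complex.norm_I, mul_one, hEnorm, norm_pow,
        Complex.norm_real, Real.norm_eq_abs]
    rw [h1]
    have hmul : t * t ≤ ‖(θ:ℂ) + σ * t‖ * ‖(θ:ℂ) + σ * t + 1‖ :=
      mul_le_mul (hSnorm t ht) (hSnorm1 t ht) ht0.le (norm_nonneg _)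
    have hden : (t * t) ^ 2 * |L| ≤ (‖(θ:ℂ) + σ * t‖ * ‖(θ:ℂ) + σ * t + 1‖) ^ 2 * |L| := by
      apply mul_le_mul_of_nonneg_right _ hLpos.le
      exact pow_le_pow_left₀ (by positivity) hmul 2
    calc E * ‖2 * ((θ:ℂ) + σ * t) + 1‖ /
        ((‖(θ:ℂ) + σ * t‖ * ‖(θ:ℂ) + σ * t + 1‖) ^ 2 * |L|)
        ≤ E * (5 * t) / ((t * t) ^ 2 * |L|) := by
          apply div_le_div₀ (by positivity)
            (by nlinarith [h2S t ht, hE0.le]) (by positivity) hden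
    _ = (5 * E / |L|) * t ^ (-3 : ℝ) := by
          rw [hrw]; field_simp
  -- derivative
  have hderiv : ∀ t ∈ Ici T, HasDerivAt F (f t - g t) t := by
    intro t ht
    have ht2 : 2 ≤ t := le_trans hT ht
    have hS0' := hS0 t ht2
    have hS1' := hS1 t ht2
    have hDt : HasDerivAt (fun u : ℝ => (θ : ℂ) + σ * u) σ t := by
      have h1 : HasDerivAt (fun u : ℝ => (u : ℂ)) 1 t := by
        simpa using (hasDerivAt_id t).ofReal_comp
      simpa using (h1.const_mul σ).const_add (θ : ℂ)
    have hexp : HasDerivAt (fun u : ℝ => Complex.exp ((L:ℂ) * ((θ:ℂ) + σ * u)))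
        (Complex.exp ((L:ℂ) * ((θ:ℂ) + σ * t)) * ((L:ℂ) * σ)) t := (hDt.const_mul (L:ℂ)).cexp
    have hnum := hexp.mul_const I
    have hden := (hDt.mul (hDt.add_const 1)).mul_const (σ * (L:ℂ))
    have hdiv := hnum.div hden (mul_ne_zero (mul_ne_zero hS0' hS1') (mul_ne_zero hσ0 hLC))
    rw [hFdef]
    refine hdiv.congr_deriv ?_
    rw [hfdef, hgdef]
    simp only [Pi.mul_apply]
    field_simp
    ring
  -- continuity
  have hScont : Continuous (fun t : ℝ => (θ:ℂ) + σ * t) := by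
    apply continuous_const.add
    exact continuous_const.mul Complex.continuous_ofReal
  have hfc : ContinuousOn f (Ioi T) := by
    rw [hfdef]
    apply ContinuousOn.mul _ continuousOn_const
    apply ContinuousOn.div
    · exact ((continuous_const.mul hScont).cexp).continuousOn
    · exact (hScont.mul (hScont.add continuous_const)).continuousOn
    · intro t ht
      exact mul_ne_zero (hS0 t (le_trans hT (le_of_lt ht))) (hS1 t (le_trans hT (le_of_lt ht)))
  have hgc : ContinuousOn g (Ioi T) := by
    rw [hgdef]
    apply ContinuousOn.div
    · exact (((continuous_const.mul hScont).cexp.mul continuous_const).mul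
        ((continuous_const.mul hScont).add continuous_const)).continuousOn
    · exact (((hScont.mul (hScont.add continuous_const)).pow 2).mul continuous_const).continuousOn
    · intro t ht
      exact mul_ne_zero (pow_ne_zero 2 (mul_ne_zero (hS0 t (le_trans hT (le_of_lt ht)))
        (hS1 t (le_trans hT (le_of_lt ht))))) hLC
  -- integrability
  have hfint : IntegrableOn f (Ioi T) := by
    have hbint : IntegrableOn (fun t : ℝ => E * t ^ (-2:ℝ)) (Ioi T) :=
      (integrableOn_Ioi_rpow_of_lt (by norm_num) hT0).const_mul E
    apply Integrable.mono' hbint (hfc.aestronglyMeasurable measurableSet_Ioi)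
    filter_upwards [ae_restrict_mem measurableSet_Ioi] with t ht
    exact hfbound t (le_trans hT (le_of_lt ht))
  have hgbint : IntegrableOn (fun t : ℝ => (5 * E / |L|) * t ^ (-3:ℝ)) (Ioi T) :=
    (integrableOn_Ioi_rpow_of_lt (by norm_num) hT0).const_mul (5 * E / |L|)
  have hgint : IntegrableOn g (Ioi T) := by
    apply Integrable.mono' hgbint (hgc.aestronglyMeasurable measurableSet_Ioi)
    filter_upwards [ae_restrict_mem measurableSet_Ioi] with t ht
    exact hgbound t (le_trans hT (le_of_lt ht))
  -- tendsto
  have hFbound : ∀ t : ℝ, 2 ≤ t → ‖F t‖ ≤ (E / |L|) * t ^ (-2:ℝ) := by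
    intro t ht
    have ht0 : (0:ℝ) < t := by linarith
    have hrw : t ^ (-2 : ℝ) = (t * t)⁻¹ := by
      rw [show (-2 : ℝ) = -((2:ℕ):ℝ) by norm_num, Real.rpow_neg ht0.le, Real.rpow_natCast]
      norm_num [sq, pow_succ]
    have h1 : ‖F t‖ = E / (‖(θ:ℂ) + σ * t‖ * ‖(θ:ℂ) + σ * t + 1‖ * |L|) := by
      rw [hFdef]
      simp only [norm_div, norm_mul, Complex.norm_I, mul_one, hEnorm, hnσ, one_mul,
        Complex.norm_real, Real.norm_eq_abs]
    rw [h1, hrw]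
    have hmul : t * t ≤ ‖(θ:ℂ) + σ * t‖ * ‖(θ:ℂ) + σ * t + 1‖ :=
      mul_le_mul (hSnorm t ht) (hSnorm1 t ht) ht0.le (norm_nonneg _)
    have : E / (‖(θ:ℂ) + σ * t‖ * ‖(θ:ℂ) + σ * t + 1‖ * |L|) ≤ E / (t * t * |L|) := by
      have hpos : (0:ℝ) < t * t * |L| := by positivity
      apply (div_le_div_iff_of_pos_left hE0 (by nlinarith [mul_le_mul_of_nonneg_right hmul hLpos.le]) hpos).mpr
      exact mul_le_mul_of_nonneg_right hmul hLpos.le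
    calc E / (‖(θ:ℂ) + σ * t‖ * ‖(θ:ℂ) + σ * t + 1‖ * |L|) ≤ E / (t * t * |L|) := this
    _ = E / |L| * (t * t)⁻¹ := by rw [mul_comm (t * t) |L|, ← div_div, div_eq_mul_inv]
  have htend : Tendsto F atTop (𝓝 (0:ℂ)) := by
    have hg0 : Tendsto (fun t : ℝ => (E / |L|) * t ^ (-2:ℝ)) atTop (𝓝 0) := by
      have := (tendsto_rpow_neg_atTop (show (0:ℝ) < 2 by norm_num)).const_mul (E / |L|)
      simpa using this
    exact squeeze_zero_norm'
      (by filter_upwards [eventually_ge_atTop (2:ℝ)] with t ht using hFbound t ht) hg0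
  -- FTC
  have hFTC : (∫ t in Ioi T, (f t - g t)) = 0 - F T :=
    integral_Ioi_of_hasDerivAt_of_tendsto' hderiv (hfint.sub hgint) htend
  have hsplit : (∫ t in Ioi T, f t) = (∫ t in Ioi T, (f t - g t)) + ∫ t in Ioi T, g t := by
    have h0 : (∫ t in Ioi T, ((f t - g t) + g t)) =
        (∫ t in Ioi T, (f t - g t)) + ∫ t in Ioi T, g t :=
      integral_add (hfint.sub hgint) hgint
    simpa using h0
  have hgI : ‖∫ t in Ioi T, g t‖ ≤ (5 * E / |L|) * (T ^ (-2:ℝ) / 2) := by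
    have h1 : ‖∫ t in Ioi T, g t‖ ≤ ∫ t in Ioi T, (5 * E / |L|) * t ^ (-3:ℝ) := by
      apply norm_integral_le_of_norm_le hgbint
      filter_upwards [ae_restrict_mem measurableSet_Ioi] with t ht
      exact hgbound t (le_trans hT (le_of_lt ht))
    have h2 : (∫ t in Ioi T, (5 * E / |L|) * t ^ (-3:ℝ)) =
        (5 * E / |L|) * (T ^ (-2:ℝ) / 2) := by
      rw [integral_const_mul, integral_Ioi_rpow_of_lt (by norm_num) hT0]
      rw [show ((-3:ℝ) + 1) = -2 by norm_num]
      ring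
    rw [h2] at h1
    exact h1
  have hrwT : T ^ (-2 : ℝ) = (T ^ 2)⁻¹ := by
    rw [show (-2 : ℝ) = -((2:ℕ):ℝ) by norm_num, Real.rpow_neg hT0.le, Real.rpow_natCast]
  refine ⟨hfint, ?_⟩
  calc ‖∫ t in Ioi T, f t‖ ≤ ‖∫ t in Ioi T, (f t - g t)‖ + ‖∫ t in Ioi T, g t‖ := by
        rw [hsplit]; exact norm_add_le _ _
  _ ≤ ‖F T‖ + (5 * E / |L|) * (T ^ (-2:ℝ) / 2) := by
        rw [hFTC]
        simp only [zero_sub, norm_neg]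
        exact add_le_add le_rfl hgI
  _ ≤ (E / |L|) * T ^ (-2:ℝ) + (5 * E / |L|) * (T ^ (-2:ℝ) / 2) :=
        add_le_add (hFbound T hT) le_rfl
  _ ≤ 4 * E / (T ^ 2 * |L|) := by
        have hT2 : (0:ℝ) < T ^ 2 := by positivity
        rw [hrwT]
        have h1 : E / |L| * (T ^ 2)⁻¹ + 5 * E / |L| * ((T ^ 2)⁻¹ / 2) =
            (7 / 2) * (E / (T ^ 2 * |L|)) := by
          field_simp
          ring
        rw [h1]
        have h2 : 0 < E / (T ^ 2 * |L|) := by positivity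
        rw [mul_div_assoc]
        linarith

theorem tail_vertical_integral_bound :
    ∃ C : ℝ, 0 < C ∧
      ∀ θ T y : ℝ, 0 ≤ θ → θ ≤ 2 → 2 ≤ T → 0 < y → y ≠ 1 →
        ‖∫ t in {t : ℝ | T ≤ |t|},
            (y : ℂ) ^ ((θ : ℂ) + (t : ℂ) * Complex.I) /
              (((θ : ℂ) + (t : ℂ) * Complex.I) * ((θ : ℂ) + (t : ℂ) * Complex.I + 1))
              * Complex.I‖
          ≤ C * y ^ θ / (T ^ 2 * |Real.log y|) := by
  refine ⟨10, by norm_num, fun θ T y hθ0 hθ2 hT hy hy1 => ?_⟩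
  set L : ℝ := Real.log y with hLdef
  have hL : L ≠ 0 := by
    intro h
    rcases Real.log_eq_zero.mp h with h | h | h
    · linarith
    · exact hy1 h
    · linarith
  have hy0 : (y : ℂ) ≠ 0 := by exact_mod_cast hy.ne'
  have hcpow : ∀ z : ℂ, (y : ℂ) ^ z = Complex.exp ((L : ℂ) * z) := by
    intro z
    rw [Complex.cpow_def_of_ne_zero hy0, hLdef, Complex.ofReal_log hy.le]
  have hEθ : Real.exp (L * θ) = y ^ θ := by
    rw [hLdef, Real.rpow_def_of_pos hy]
  set f : ℝ → ℂ := fun t : ℝ => (y : ℂ) ^ ((θ : ℂ) + (t : ℂ) * Complex.I) /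
      (((θ : ℂ) + (t : ℂ) * Complex.I) * ((θ : ℂ) + (t : ℂ) * Complex.I + 1))
      * Complex.I with hfdef
  have hpos := tail_core θ T L I (Or.inl rfl) hθ0 hθ2 hT hL
  have hneg := tail_core θ T L (-I) (Or.inr rfl) hθ0 hθ2 hT hL
  have hfI : (fun t : ℝ => Complex.exp ((L : ℂ) * ((θ : ℂ) + I * t)) /
      (((θ : ℂ) + I * t) * ((θ : ℂ) + I * t + 1)) * I) = f := by
    funext t
    rw [hfdef]
    simp only
    rw [hcpow]
    ring_nf
  have hfnegI : (fun t : ℝ => Complex.exp ((L : ℂ) * ((θ : ℂ) + (-I) * t)) /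
      (((θ : ℂ) + (-I) * t) * ((θ : ℂ) + (-I) * t + 1)) * I) = (fun t : ℝ => f (-t)) := by
    funext t
    rw [hfdef]
    simp only
    rw [hcpow]
    push_cast
    ring_nf
  rw [hfI] at hpos
  rw [hfnegI] at hneg
  have hsetsplit : {t : ℝ | T ≤ |t|} = Set.Iic (-T) ∪ Set.Ici T := by
    ext t
    simp only [Set.mem_setOf_eq, Set.mem_union, Set.mem_Iic, Set.mem_Ici, le_abs]
    constructor
    · rintro (h | h)
      · right; exact h
      · left; linarith
    · rintro (h | h)
      · right; linarith
      · left; exact h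
  have hIci : IntegrableOn f (Set.Ici T) :=
    Iff.mpr integrableOn_Ici_iff_integrableOn_Ioi hpos.1
  have hIic : IntegrableOn f (Set.Iic (-T)) := by
    have m : MeasurableEmbedding (Neg.neg : ℝ → ℝ) := (Homeomorph.neg ℝ).measurableEmbedding
    have key : IntegrableOn f (Set.Iic (-T)) (Measure.map Neg.neg volume) := by
      rw [m.integrableOn_map_iff]
      simp only [Function.comp_def, Set.neg_preimage, Set.neg_Iic, neg_neg]
      exact Iff.mpr integrableOn_Ici_iff_integrableOn_Ioi hneg.1
    rwa [Measure.map_neg_eq_self] at key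
  have hdisj : Disjoint (Set.Iic (-T)) (Set.Ici T) :=
    Set.Iic_disjoint_Ici.mpr (by intro h; linarith)
  rw [hsetsplit, setIntegral_union hdisj measurableSet_Ici hIic hIci]
  have h1 : ‖∫ t in Set.Iic (-T), f t‖ ≤ 4 * Real.exp (L * θ) / (T ^ 2 * |L|) := by
    rw [← integral_comp_neg_Ioi]
    exact hneg.2
  have h2 : ‖∫ t in Set.Ici T, f t‖ ≤ 4 * Real.exp (L * θ) / (T ^ 2 * |L|) := by
    rw [integral_Ici_eq_integral_Ioi]
    exact hpos.2
  have h3 := norm_add_le (∫ t in Set.Iic (-T), f t) (∫ t in Set.Ici T, f t)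
  have hA : (0:ℝ) ≤ y ^ θ / (T ^ 2 * |L|) := by positivity
  rw [hEθ] at h1 h2
  calc ‖(∫ t in Set.Iic (-T), f t) + ∫ t in Set.Ici T, f t‖
      ≤ 4 * y ^ θ / (T ^ 2 * |L|) + 4 * y ^ θ / (T ^ 2 * |L|) := by
        refine le_trans h3 (add_le_add h1 h2)
  _ ≤ 10 * y ^ θ / (T ^ 2 * |Real.log y|) := by
        rw [← hLdef]
        rw [mul_div_assoc, mul_div_assoc]
        linarith
end
end

section
/- For a positive integer k one has b(k) = (1 ∗ g)(k)/ζ(2)², where ∗ denotes Dirichlet convolution and g is the multiplicative function supported on cubefree integers determined by g(ℓ) = 1/((ℓ−1)(ℓ+1)²), g(ℓ²) = ℓ/((ℓ−1)(ℓ+1)²) and g(ℓ^q) = 0 for all q ≥ 3, for every prime ℓ. -/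
noncomputable section

/-- The arithmetic function `b(k)` given by the product of local densities. -/
def bDensity (k : ℕ) : ℝ :=
  ∏' p : Nat.Primes,
    (1 - 2 / ((p : ℕ) : ℝ) ^ 2 + (1 / ((p : ℕ) : ℝ) ^ 2) *
      (if (p : ℕ) ^ 2 ∣ k then 1
        else if (p : ℕ) ∣ k then (((p : ℕ) : ℝ))⁻¹
        else (((p : ℕ) : ℝ) ^ 2)⁻¹))

/-- The multiplicative function `g`, supported on cubefree integers, with
`g(ℓ) = 1/((ℓ−1)(ℓ+1)²)` and `g(ℓ²) = ℓ/((ℓ−1)(ℓ+1)²)` at every prime `ℓ`. -/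
def gMult (k : ℕ) : ℝ :=
  ∏ p ∈ k.primeFactors,
    (if k.factorization p = 1 then 1 / (((p : ℝ) - 1) * ((p : ℝ) + 1) ^ 2)
      else if k.factorization p = 2 then (p : ℝ) / (((p : ℝ) - 1) * ((p : ℝ) + 1) ^ 2)
      else 0)

open Real Finset

/-- The local Euler factor of the convolution. -/
def cFactor (k p : ℕ) : ℝ :=
  if p ^ 2 ∣ k then
    1 + 1 / (((p : ℝ) - 1) * ((p : ℝ) + 1) ^ 2) + (p : ℝ) / (((p : ℝ) - 1) * ((p : ℝ) + 1) ^ 2)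
  else if p ∣ k then 1 + 1 / (((p : ℝ) - 1) * ((p : ℝ) + 1) ^ 2)
  else 1

def zetaTwoFun : ℕ →*₀ ℝ where
  toFun n := (((n : ℝ)) ^ 2)⁻¹
  map_zero' := by norm_num
  map_one' := by norm_num
  map_mul' x y := by push_cast; rw [mul_pow, mul_inv]

lemma summable_zetaTwoFun : Summable (fun n => ‖zetaTwoFun n‖) :=
  hasSum_zeta_two.summable.congr fun n => by
    show (1:ℝ) / (n:ℝ) ^ 2 = ‖(((n:ℝ)) ^ 2)⁻¹‖
    rw [Real.norm_eq_abs, abs_of_nonneg (by positivity), one_div]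

lemma tsum_zetaTwoFun : ∑' n, zetaTwoFun n = π ^ 2 / 6 := by
  rw [← hasSum_zeta_two.tsum_eq]
  exact tsum_congr fun n => by
    show (((n:ℝ)) ^ 2)⁻¹ = 1 / (n:ℝ) ^ 2
    rw [one_div]

lemma pi_sq_div_six_ne : (π ^ 2 / 6 : ℝ) ≠ 0 := by positivity

lemma hasProd_one_sub :
    HasProd (fun p : Nat.Primes => 1 - (((p : ℕ) : ℝ) ^ 2)⁻¹) (π ^ 2 / 6)⁻¹ := by
  have h := EulerProduct.eulerProduct_completely_multiplicative_hasProd summable_zetaTwoFun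
  rw [tsum_zetaTwoFun] at h
  have h' : Filter.Tendsto (fun s : Finset Nat.Primes => ∏ p ∈ s, (1 - zetaTwoFun ↑p)⁻¹)
      Filter.atTop (nhds (π ^ 2 / 6)) := h
  have h2 := h'.inv₀ pi_sq_div_six_ne
  have key : ∀ s : Finset Nat.Primes,
      (∏ p ∈ s, (1 - zetaTwoFun ↑p)⁻¹)⁻¹ = ∏ p ∈ s, (1 - (((p : ℕ) : ℝ) ^ 2)⁻¹) := by
    intro s
    rw [← Finset.prod_inv_distrib]
    exact Finset.prod_congr rfl fun p _ => by rw [inv_inv]; rfl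
  show Filter.Tendsto _ Filter.atTop (nhds (π ^ 2 / 6)⁻¹)
  exact Filter.Tendsto.congr key h2

lemma local_eq (k p : ℕ) (hp : p.Prime) :
    (1 - 2 / (p : ℝ) ^ 2 + (1 / (p : ℝ) ^ 2) *
      (if p ^ 2 ∣ k then 1
        else if p ∣ k then ((p : ℝ))⁻¹
        else (((p : ℝ)) ^ 2)⁻¹))
      = (1 - ((p : ℝ) ^ 2)⁻¹) * (1 - ((p : ℝ) ^ 2)⁻¹) * cFactor k p := by
  have h2 : (2 : ℝ) ≤ (p : ℝ) := by exact_mod_cast hp.two_le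
  have h0 : (p : ℝ) ≠ 0 := by linarith
  have hm : (p : ℝ) - 1 ≠ 0 := by intro h; nlinarith
  have hp1 : (p : ℝ) + 1 ≠ 0 := by positivity
  unfold cFactor
  split_ifs with ha hb
  · field_simp
    ring
  · field_simp
    ring
  · field_simp
    ring

lemma gMult_one : gMult 1 = 1 := by simp [gMult]

lemma gMult_prime_pow {p : ℕ} (hp : p.Prime) {i : ℕ} (hi : i ≠ 0) :
    gMult (p ^ i) =
      if i = 1 then 1 / (((p : ℝ) - 1) * ((p : ℝ) + 1) ^ 2)
      else if i = 2 then (p : ℝ) / (((p : ℝ) - 1) * ((p : ℝ) + 1) ^ 2)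
      else 0 := by
  unfold gMult
  rw [Nat.primeFactors_pow _ hi, hp.primeFactors, Finset.prod_singleton,
    hp.factorization_pow]
  simp only [Finsupp.single_eq_same]

lemma gMult_mul_coprime {m n : ℕ} (hm : m ≠ 0) (hn : n ≠ 0) (h : m.Coprime n) :
    gMult (m * n) = gMult m * gMult n := by
  unfold gMult
  rw [Nat.primeFactors_mul hm hn, Finset.prod_union (Nat.Coprime.disjoint_primeFactors h)]
  have keym : ∀ p ∈ m.primeFactors, (m * n).factorization p = m.factorization p := by
    intro p hp
    have hpm := Nat.prime_of_mem_primeFactors hp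
    have hpd := Nat.dvd_of_mem_primeFactors hp
    have hpn : ¬ p ∣ n := (Nat.Prime.coprime_iff_not_dvd hpm).mp (h.coprime_dvd_left hpd)
    rw [Nat.factorization_mul hm hn, Finsupp.add_apply,
      Nat.factorization_eq_zero_of_not_dvd hpn, add_zero]
  have keyn : ∀ p ∈ n.primeFactors, (m * n).factorization p = n.factorization p := by
    intro p hp
    have hpm := Nat.prime_of_mem_primeFactors hp
    have hpd := Nat.dvd_of_mem_primeFactors hp
    have hpn : ¬ p ∣ m := (Nat.Prime.coprime_iff_not_dvd hpm).mp ((h.symm).coprime_dvd_left hpd)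
    rw [Nat.factorization_mul hm hn, Finsupp.add_apply,
      Nat.factorization_eq_zero_of_not_dvd hpn, zero_add]
  congr 1
  · exact Finset.prod_congr rfl fun p hp => by rw [keym p hp]
  · exact Finset.prod_congr rfl fun p hp => by rw [keyn p hp]

open ArithmeticFunction in
lemma sum_gMult_eq (k : ℕ) (hk : k ≠ 0) :
    ∑ d ∈ k.divisors, gMult d = ∏ p ∈ k.primeFactors, cFactor k p := by
  classical
  set G : ArithmeticFunction ℝ := ⟨fun n => if n = 0 then 0 else gMult n, if_pos rfl⟩ with hGdef
  have hGapp : ∀ n, n ≠ 0 → G n = gMult n := fun n hn => if_neg hn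
  have hG : G.IsMultiplicative := by
    constructor
    · rw [hGapp 1 one_ne_zero, gMult_one]
    · intro m n h
      rcases eq_or_ne m 0 with rfl | hm
      · have hn1 : n = 1 := by simpa using h
        subst hn1; simp
      rcases eq_or_ne n 0 with rfl | hn
      · have hm1 : m = 1 := by simpa using h
        subst hm1; simp
      rw [hGapp _ (mul_ne_zero hm hn), hGapp _ hm, hGapp _ hn, gMult_mul_coprime hm hn h]
  have hzg : ((ArithmeticFunction.zeta : ArithmeticFunction ℝ) * G).IsMultiplicative :=
    isMultiplicative_zeta.natCast.mul hG
  have step1 : ∑ d ∈ k.divisors, gMult d = ((ArithmeticFunction.zeta : ArithmeticFunction ℝ) * G) k := by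
    rw [coe_zeta_mul_apply]
    exact (Finset.sum_congr rfl fun d hd => (hGapp d (Nat.pos_of_mem_divisors hd).ne').symm)
  rw [step1, ArithmeticFunction.IsMultiplicative.multiplicative_factorization _ hzg hk,
    Finsupp.prod, Nat.support_factorization]
  refine Finset.prod_congr rfl fun p hp => ?_
  have hpp := Nat.prime_of_mem_primeFactors hp
  have hp0 : p ≠ 0 := hpp.pos.ne'
  set e := k.factorization p with he
  have he1 : 1 ≤ e := (Nat.Prime.factorization_pos_of_dvd hpp hk
    (Nat.dvd_of_mem_primeFactors hp))
  have hsum : ((ArithmeticFunction.zeta : ArithmeticFunction ℝ) * G) (p ^ e) = ∑ i ∈ Finset.range (e + 1), G (p ^ i) := by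
    rw [coe_zeta_mul_apply, Nat.sum_divisors_prime_pow hpp]
  have hG0 : G (p ^ 0) = 1 := by rw [pow_zero, hGapp 1 one_ne_zero, gMult_one]
  have hG1 : G (p ^ 1) = 1 / (((p : ℝ) - 1) * ((p : ℝ) + 1) ^ 2) := by
    rw [hGapp _ (pow_ne_zero _ hp0), gMult_prime_pow hpp one_ne_zero]; simp
  have hG2 : G (p ^ 2) = (p : ℝ) / (((p : ℝ) - 1) * ((p : ℝ) + 1) ^ 2) := by
    rw [hGapp _ (pow_ne_zero _ hp0), gMult_prime_pow hpp (by norm_num)]; norm_num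
  have hGi : ∀ i, 3 ≤ i → G (p ^ i) = 0 := by
    intro i hi
    rw [hGapp _ (pow_ne_zero _ hp0), gMult_prime_pow hpp (by omega)]
    rw [if_neg (by omega), if_neg (by omega)]
  have hdvd1 : p ∣ k := Nat.dvd_of_mem_primeFactors hp
  have hdvd2 : p ^ 2 ∣ k ↔ 2 ≤ e := (Nat.Prime.pow_dvd_iff_le_factorization hpp hk)
  rw [hsum]
  unfold cFactor
  rcases eq_or_lt_of_le he1 with h1 | h2
  · have hnd : ¬ p ^ 2 ∣ k := by rw [hdvd2]; omega
    rw [if_neg hnd, if_pos hdvd1, ← h1, Finset.sum_range_succ, Finset.sum_range_one, hG0, hG1]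
  · have h2' : 2 ≤ e := h2
    rw [if_pos (hdvd2.mpr h2')]
    have hres : ∑ i ∈ Finset.range (e + 1), G (p ^ i) = ∑ i ∈ Finset.range 3, G (p ^ i) := by
      symm
      apply Finset.sum_subset (Finset.range_subset_range.mpr (by omega))
      intro x _ hx3
      exact hGi x (by simpa using hx3)
    rw [hres, Finset.sum_range_succ, Finset.sum_range_succ, Finset.sum_range_succ,
      Finset.sum_range_zero, hG0, hG1, hG2]
    ring

theorem b_eq_convolution (k : ℕ) (hk : 1 ≤ k) :
    bDensity k = (∑ d ∈ k.divisors, gMult d) / ((riemannZeta 2).re) ^ 2 := by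
  classical
  have hk0 : k ≠ 0 := by omega
  set s : Finset Nat.Primes := k.primeFactors.subtype Nat.Prime with hs
  have hc : HasProd (fun p : Nat.Primes => cFactor k (p : ℕ)) (∏ p ∈ s, cFactor k (p : ℕ)) := by
    apply hasProd_prod_of_ne_finset_one
    intro q hq
    have hnd : ¬ (q : ℕ) ∣ k := by
      intro hd
      exact hq (by rw [hs]; exact Finset.mem_subtype.mpr (Nat.mem_primeFactors.mpr ⟨q.2, hd, hk0⟩))
    have hnd2 : ¬ (q : ℕ) ^ 2 ∣ k := fun h => hnd ((dvd_pow_self _ two_ne_zero).trans h)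
    unfold cFactor
    rw [if_neg hnd2, if_neg hnd]
  have hB := hasProd_one_sub
  have hprod : HasProd (fun p : Nat.Primes =>
      (1 - 2 / ((p : ℕ) : ℝ) ^ 2 + (1 / ((p : ℕ) : ℝ) ^ 2) *
      (if (p : ℕ) ^ 2 ∣ k then 1
        else if (p : ℕ) ∣ k then (((p : ℕ) : ℝ))⁻¹
        else (((p : ℕ) : ℝ) ^ 2)⁻¹)))
      ((π ^ 2 / 6)⁻¹ * (π ^ 2 / 6)⁻¹ * ∏ p ∈ s, cFactor k (p : ℕ)) := by
    have hfull := (hB.mul hB).mul hc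
    have hfun : (fun p : Nat.Primes =>
        (1 - 2 / ((p : ℕ) : ℝ) ^ 2 + (1 / ((p : ℕ) : ℝ) ^ 2) *
        (if (p : ℕ) ^ 2 ∣ k then 1
          else if (p : ℕ) ∣ k then (((p : ℕ) : ℝ))⁻¹
          else (((p : ℕ) : ℝ) ^ 2)⁻¹)))
        = fun p : Nat.Primes =>
          ((1 - (((p : ℕ) : ℝ) ^ 2)⁻¹) * (1 - (((p : ℕ) : ℝ) ^ 2)⁻¹)) * cFactor k (p : ℕ) :=
      funext fun p => local_eq k (p : ℕ) p.2
    rw [hfun]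
    exact hfull
  have hbd : bDensity k = (π ^ 2 / 6)⁻¹ * (π ^ 2 / 6)⁻¹ * ∏ p ∈ s, cFactor k (p : ℕ) :=
    hprod.tprod_eq
  have hre : (riemannZeta 2).re = π ^ 2 / 6 := by
    rw [riemannZeta_two,
      show ((π : ℂ) ^ 2 / 6) = ((π ^ 2 / 6 : ℝ) : ℂ) by push_cast; ring, Complex.ofReal_re]
  have hP : ∏ p ∈ s, cFactor k (p : ℕ) = ∑ d ∈ k.divisors, gMult d := by
    have h1 : ∏ x ∈ k.primeFactors.subtype Nat.Prime, cFactor k ↑x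
        = ∏ x ∈ k.primeFactors, cFactor k x :=
      Finset.prod_subtype_of_mem _ fun x hx => Nat.prime_of_mem_primeFactors hx
    rw [hs]
    exact h1.trans (sum_gMult_eq k hk0).symm
  rw [hbd, hP, hre, sq, div_eq_mul_inv, mul_inv]
  ring
end
end
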